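/- The systemic Mean-AVaR measure defined on random vectors X by ρ_s[X] = (1−κ) Σ_{i=1}^m c_i ρ[X_i] + κ inf_{η∈R} { η + (1/α) Σ_{i=1}^m c_i (ρ[X_i] − η)_+ }, where ρ is a coherent scalar risk measure, κ ∈ [0,1], α ∈ (0,1), and c ∈ S_m^+, satisfies axioms A1–A4: it is convex, componentwise monotone, positively homogeneous, and satisfies ρ_s[X + aI] = ρ_s[X] + a for all real a. -/
import Mathlib


open MeasureTheory
open scoped ENNReal

/-- The systemic Mean-AVaR measure:
`ρ_s[X] = (1−κ) Σ_i c_i ρ[X_i] + κ inf_η { η + (1/α) Σ_i c_i (ρ[X_i] − η)_+ }`,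
applied to the vector of individual risks `i ↦ ρ[X_i]`. -/
noncomputable def meanAvarAgg {m : ℕ} (κ α : ℝ) (c : Fin m → ℝ) (r : Fin m → ℝ) : ℝ :=
  (1 - κ) * ∑ i, c i * r i +
    κ * ⨅ η : ℝ, (η + (1 / α) * ∑ i, c i * max (r i - η) 0)

section aux

variable {m : ℕ}

/-- The inner objective of the AVaR infimum. -/
noncomputable def favg (α : ℝ) (c r : Fin m → ℝ) (η : ℝ) : ℝ :=
  η + (1 / α) * ∑ i, c i * max (r i - η) 0

lemma meanAvarAgg_eq (κ α : ℝ) (c r : Fin m → ℝ) :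
    meanAvarAgg κ α c r = (1 - κ) * ∑ i, c i * r i + κ * ⨅ η, favg α c r η := rfl

lemma favg_lb {α : ℝ} (hα0 : 0 < α) (hα1 : α ≤ 1) {c : Fin m → ℝ}
    (hc0 : ∀ i, 0 ≤ c i) (hc1 : ∑ i, c i = 1) (r : Fin m → ℝ) (η : ℝ) :
    ∑ i, c i * r i ≤ favg α c r η := by
  have hstep : ∀ i : Fin m, c i * (r i - η) ≤ (1/α) * (c i * max (r i - η) 0) := by
    intro i
    rw [show (1/α) * (c i * max (r i - η) 0) = c i * ((1/α) * max (r i - η) 0) by ring]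
    refine mul_le_mul_of_nonneg_left ?_ (hc0 i)
    rcases le_or_gt (r i - η) 0 with h | h
    · have : (0:ℝ) ≤ (1/α) * max (r i - η) 0 := by positivity
      linarith
    · rw [max_eq_left h.le]
      have h1 : (1:ℝ) ≤ 1/α := by rw [le_div_iff₀ hα0]; linarith
      nlinarith
  have hsum : ∑ i, c i * (r i - η) ≤ ∑ i, (1/α) * (c i * max (r i - η) 0) :=
    Finset.sum_le_sum fun i _ => hstep i
  have h1 : ∑ i, c i * (r i - η) = (∑ i, c i * r i) - η := by
    simp only [mul_sub, Finset.sum_sub_distrib, ← Finset.sum_mul, hc1, one_mul]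
  have h2 : ∑ i, (1/α) * (c i * max (r i - η) 0)
      = (1/α) * ∑ i, c i * max (r i - η) 0 := by
    rw [Finset.mul_sum]
  rw [h1, h2] at hsum
  unfold favg
  linarith

lemma favg_bdd {α : ℝ} (hα0 : 0 < α) (hα1 : α ≤ 1) {c : Fin m → ℝ}
    (hc0 : ∀ i, 0 ≤ c i) (hc1 : ∑ i, c i = 1) (r : Fin m → ℝ) :
    BddBelow (Set.range (favg α c r)) := by
  exact ⟨∑ i, c i * r i, by
    rintro x ⟨η, rfl⟩
    exact favg_lb hα0 hα1 hc0 hc1 r η⟩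

lemma favg_mono {α : ℝ} (hα0 : 0 < α) {c : Fin m → ℝ} (hc0 : ∀ i, 0 ≤ c i)
    {r s : Fin m → ℝ} (hrs : ∀ i, r i ≤ s i) (η : ℝ) :
    favg α c r η ≤ favg α c s η := by
  unfold favg
  have : ∑ i, c i * max (r i - η) 0 ≤ ∑ i, c i * max (s i - η) 0 := by
    refine Finset.sum_le_sum fun i _ => mul_le_mul_of_nonneg_left ?_ (hc0 i)
    exact max_le_max (by linarith [hrs i]) le_rfl
  have h1α : (0:ℝ) ≤ 1/α := by positivity
  nlinarith

lemma iInf_favg_mono {α : ℝ} (hα0 : 0 < α) (hα1 : α ≤ 1) {c : Fin m → ℝ}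
    (hc0 : ∀ i, 0 ≤ c i) (hc1 : ∑ i, c i = 1)
    {r s : Fin m → ℝ} (hrs : ∀ i, r i ≤ s i) :
    (⨅ η, favg α c r η) ≤ ⨅ η, favg α c s η :=
  ciInf_mono (favg_bdd hα0 hα1 hc0 hc1 r) (favg_mono hα0 hc0 hrs)

lemma iInf_favg_convex {α : ℝ} (hα0 : 0 < α) (hα1 : α ≤ 1) {c : Fin m → ℝ}
    (hc0 : ∀ i, 0 ≤ c i) (hc1 : ∑ i, c i = 1)
    (r s : Fin m → ℝ) (a b : ℝ) (ha : 0 ≤ a) (hb : 0 ≤ b) (hab : a + b = 1) :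
    (⨅ η, favg α c (fun i => a * r i + b * s i) η)
      ≤ a * (⨅ η, favg α c r η) + b * ⨅ η, favg α c s η := by
  rw [Real.mul_iInf_of_nonneg ha, Real.mul_iInf_of_nonneg hb]
  refine le_ciInf_add_ciInf fun η₁ η₂ => ?_
  calc (⨅ η, favg α c (fun i => a * r i + b * s i) η)
      ≤ favg α c (fun i => a * r i + b * s i) (a * η₁ + b * η₂) :=
        ciInf_le (favg_bdd hα0 hα1 hc0 hc1 _) _
    _ ≤ a * favg α c r η₁ + b * favg α c s η₂ := by
        unfold favg
        have hsum : ∑ i, c i * max (a * r i + b * s i - (a * η₁ + b * η₂)) 0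
            ≤ ∑ i, c i * (a * max (r i - η₁) 0 + b * max (s i - η₂) 0) := by
          refine Finset.sum_le_sum fun i _ => mul_le_mul_of_nonneg_left ?_ (hc0 i)
          refine max_le ?_ (by positivity)
          have h1 : r i - η₁ ≤ max (r i - η₁) 0 := le_max_left _ _
          have h2 : s i - η₂ ≤ max (s i - η₂) 0 := le_max_left _ _
          nlinarith
        have hsplit : ∑ i, c i * (a * max (r i - η₁) 0 + b * max (s i - η₂) 0)
            = a * (∑ i, c i * max (r i - η₁) 0) + b * ∑ i, c i * max (s i - η₂) 0 := by
          rw [Finset.mul_sum, Finset.mul_sum, ← Finset.sum_add_distrib]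
          exact Finset.sum_congr rfl fun i _ => by ring
        rw [hsplit] at hsum
        have h1α : (0:ℝ) ≤ 1/α := by positivity
        nlinarith

lemma iInf_favg_homog {α : ℝ} {c : Fin m → ℝ}
    (t : ℝ) (ht : 0 < t) (r : Fin m → ℝ) :
    (⨅ η, favg α c (fun i => t * r i) η) = t * ⨅ η, favg α c r η := by
  have hsurj : Function.Surjective (fun η : ℝ => t * η) := fun y =>
    ⟨y / t, by field_simp⟩
  have hkey : ∀ η : ℝ, favg α c (fun i => t * r i) (t * η) = t * favg α c r η := by
    intro η
    unfold favg
    have : ∀ i : Fin m, c i * max (t * r i - t * η) 0 = t * (c i * max (r i - η) 0) := by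
      intro i
      rw [show t * r i - t * η = t * (r i - η) by ring, show (0:ℝ) = t * 0 by ring,
        ← mul_max_of_nonneg _ _ ht.le]
      ring
    rw [Finset.sum_congr rfl fun i _ => this i, ← Finset.mul_sum]
    ring
  have h1 : (⨅ η, favg α c (fun i => t * r i) η)
      = ⨅ η, favg α c (fun i => t * r i) (t * η) := by
    rw [iInf, iInf]
    congr 1
    exact (hsurj.range_comp (favg α c fun i => t * r i)).symm
  rw [h1]
  simp only [hkey]
  exact (Real.mul_iInf_of_nonneg ht.le _).symm

lemma iInf_favg_trans {α : ℝ} (hα0 : 0 < α) (hα1 : α ≤ 1) {c : Fin m → ℝ}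
    (hc0 : ∀ i, 0 ≤ c i) (hc1 : ∑ i, c i = 1) (r : Fin m → ℝ) (a : ℝ) :
    (⨅ η, favg α c (fun i => r i + a) η) = (⨅ η, favg α c r η) + a := by
  have hsurj : Function.Surjective (fun η : ℝ => η + a) := fun y =>
    ⟨y - a, by ring⟩
  have hkey : ∀ η : ℝ, favg α c (fun i => r i + a) (η + a) = favg α c r η + a := by
    intro η
    unfold favg
    have : ∀ i : Fin m, (r i + a - (η + a)) = r i - η := fun i => by ring
    simp only [this]
    ring
  have h1 : (⨅ η, favg α c (fun i => r i + a) η)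
      = ⨅ η, favg α c (fun i => r i + a) (η + a) := by
    rw [iInf, iInf]
    congr 1
    exact (hsurj.range_comp (favg α c fun i => r i + a)).symm
  rw [h1]
  simp only [hkey]
  exact (ciInf_add (favg_bdd hα0 hα1 hc0 hc1 r) a).symm

lemma agg_mono {κ α : ℝ} (hκ0 : 0 ≤ κ) (hκ1 : κ ≤ 1) (hα0 : 0 < α) (hα1 : α ≤ 1)
    {c : Fin m → ℝ} (hc0 : ∀ i, 0 ≤ c i) (hc1 : ∑ i, c i = 1)
    {r s : Fin m → ℝ} (hrs : ∀ i, r i ≤ s i) :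
    meanAvarAgg κ α c r ≤ meanAvarAgg κ α c s := by
  rw [meanAvarAgg_eq, meanAvarAgg_eq]
  have h1 : ∑ i, c i * r i ≤ ∑ i, c i * s i :=
    Finset.sum_le_sum fun i _ => mul_le_mul_of_nonneg_left (hrs i) (hc0 i)
  have h2 := iInf_favg_mono hα0 hα1 hc0 hc1 hrs
  nlinarith

lemma agg_convex {κ α : ℝ} (hκ0 : 0 ≤ κ) (hκ1 : κ ≤ 1) (hα0 : 0 < α) (hα1 : α ≤ 1)
    {c : Fin m → ℝ} (hc0 : ∀ i, 0 ≤ c i) (hc1 : ∑ i, c i = 1)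
    {r s u : Fin m → ℝ} (a b : ℝ) (ha : 0 ≤ a) (hb : 0 ≤ b) (hab : a + b = 1)
    (hu : ∀ i, u i ≤ a * r i + b * s i) :
    meanAvarAgg κ α c u ≤ a * meanAvarAgg κ α c r + b * meanAvarAgg κ α c s := by
  have step1 : meanAvarAgg κ α c u ≤ meanAvarAgg κ α c (fun i => a * r i + b * s i) :=
    agg_mono hκ0 hκ1 hα0 hα1 hc0 hc1 hu
  refine step1.trans ?_
  rw [meanAvarAgg_eq, meanAvarAgg_eq, meanAvarAgg_eq]
  have hsum : ∑ i, c i * (a * r i + b * s i)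
      = a * (∑ i, c i * r i) + b * ∑ i, c i * s i := by
    rw [Finset.mul_sum, Finset.mul_sum, ← Finset.sum_add_distrib]
    exact Finset.sum_congr rfl fun i _ => by ring
  have hinf := iInf_favg_convex hα0 hα1 hc0 hc1 r s a b ha hb hab
  rw [hsum]
  nlinarith

lemma agg_homog {κ α : ℝ} {c : Fin m → ℝ}
    (t : ℝ) (ht : 0 < t) (r : Fin m → ℝ) :
    meanAvarAgg κ α c (fun i => t * r i) = t * meanAvarAgg κ α c r := by
  rw [meanAvarAgg_eq, meanAvarAgg_eq, iInf_favg_homog t ht r]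
  rw [show ∑ i, c i * (t * r i) = t * ∑ i, c i * r i by
    rw [Finset.mul_sum]; exact Finset.sum_congr rfl fun i _ => by ring]
  ring

lemma agg_trans {κ α : ℝ} (hα0 : 0 < α) (hα1 : α ≤ 1)
    {c : Fin m → ℝ} (hc0 : ∀ i, 0 ≤ c i) (hc1 : ∑ i, c i = 1)
    (r : Fin m → ℝ) (a : ℝ) :
    meanAvarAgg κ α c (fun i => r i + a) = meanAvarAgg κ α c r + a := by
  rw [meanAvarAgg_eq, meanAvarAgg_eq, iInf_favg_trans hα0 hα1 hc0 hc1 r a]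
  rw [show ∑ i, c i * (r i + a) = (∑ i, c i * r i) + a by
    simp only [mul_add, Finset.sum_add_distrib, ← Finset.sum_mul, hc1, one_mul]]
  ring

end aux

/-- the systemic Mean-AVaR measure
`ρ_s[X] = (1−κ) Σ_i c_i ρ[X_i] + κ inf_η { η + (1/α) Σ_i c_i (ρ[X_i] − η)_+ }`
with `ρ` a coherent scalar risk measure, `κ ∈ [0,1]`, `α ∈ (0,1)`, `c ∈ S_m^+`,
satisfies axioms A1–A4. -/
theorem systemic_mean_avar_coherent
    {Ω : Type*} [MeasurableSpace Ω] {m : ℕ} {p : ℝ≥0∞}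
    (μ : Measure Ω) [IsProbabilityMeasure μ] [Fact (1 ≤ p)]
    (κ : ℝ) (hκ : κ ∈ Set.Icc (0 : ℝ) 1)
    (α : ℝ) (hα : α ∈ Set.Ioo (0 : ℝ) 1)
    (c : Fin m → ℝ) (hc : (∀ i, 0 ≤ c i) ∧ ∑ i, c i = 1)
    -- constant scalar random variables
    (K : ℝ → Lp ℝ p μ) (hK : ∀ a : ℝ, ∀ᵐ ω ∂μ, (K a) ω = a)
    -- the coherent scalar risk measure ρ
    (ρ : Lp ℝ p μ → ℝ)
    (hconvex : ∀ Z W : Lp ℝ p μ, ∀ a b : ℝ, 0 ≤ a → 0 ≤ b → a + b = 1 →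
      ρ (a • Z + b • W) ≤ a * ρ Z + b * ρ W)
    (hmono : ∀ Z W : Lp ℝ p μ, (∀ᵐ ω ∂μ, W ω ≤ Z ω) → ρ W ≤ ρ Z)
    (hhomog : ∀ (t : ℝ), 0 < t → ∀ Z, ρ (t • Z) = t * ρ Z)
    (htrans : ∀ (Z : Lp ℝ p μ) (a : ℝ), ρ (Z + K a) = ρ Z + a)
    -- components of random vectors
    (comp : Lp (EuclideanSpace ℝ (Fin m)) p μ → Fin m → Lp ℝ p μ)
    (hcomp : ∀ X i, ∀ᵐ ω ∂μ, (comp X i) ω = X ω i)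
    -- the all-ones constant random vector
    (I : Lp (EuclideanSpace ℝ (Fin m)) p μ) (hI : ∀ᵐ ω ∂μ, ∀ i, I ω i = 1) :
    (∀ X Y : Lp (EuclideanSpace ℝ (Fin m)) p μ, ∀ a b : ℝ,
      0 ≤ a → 0 ≤ b → a + b = 1 →
      meanAvarAgg κ α c (fun i => ρ (comp (a • X + b • Y) i)) ≤
        a * meanAvarAgg κ α c (fun i => ρ (comp X i)) +
          b * meanAvarAgg κ α c (fun i => ρ (comp Y i))) ∧
    (∀ X Y : Lp (EuclideanSpace ℝ (Fin m)) p μ,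
      (∀ᵐ ω ∂μ, ∀ i, Y ω i ≤ X ω i) →
      meanAvarAgg κ α c (fun i => ρ (comp Y i)) ≤
        meanAvarAgg κ α c (fun i => ρ (comp X i))) ∧
    (∀ (t : ℝ), 0 < t → ∀ X,
      meanAvarAgg κ α c (fun i => ρ (comp (t • X) i)) =
        t * meanAvarAgg κ α c (fun i => ρ (comp X i))) ∧
    (∀ (X : Lp (EuclideanSpace ℝ (Fin m)) p μ) (a : ℝ),
      meanAvarAgg κ α c (fun i => ρ (comp (X + a • I) i)) =
        meanAvarAgg κ α c (fun i => ρ (comp X i)) + a) := by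
  obtain ⟨hκ0, hκ1⟩ := hκ
  obtain ⟨hα0, hα1⟩ := hα
  obtain ⟨hc0, hc1⟩ := hc
  have hα1' : α ≤ 1 := hα1.le
  -- ρ respects a.e. equality
  have hcongr : ∀ Z W : Lp ℝ p μ, (∀ᵐ ω ∂μ, Z ω = W ω) → ρ Z = ρ W := by
    intro Z W h
    exact le_antisymm (hmono W Z (h.mono fun ω hω => hω.le))
      (hmono Z W (h.mono fun ω hω => hω.ge))
  refine ⟨?_, ?_, ?_, ?_⟩
  · -- A1: convexity
    intro X Y a b ha hb hab
    refine agg_convex hκ0 hκ1 hα0 hα1' hc0 hc1 a b ha hb hab fun i => ?_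
    have heq : ρ (comp (a • X + b • Y) i) = ρ (a • comp X i + b • comp Y i) := by
      refine hcongr _ _ ?_
      filter_upwards [hcomp (a • X + b • Y) i, hcomp X i, hcomp Y i,
        Lp.coeFn_add (a • X) (b • Y), Lp.coeFn_smul a X, Lp.coeFn_smul b Y,
        Lp.coeFn_add (a • comp X i) (b • comp Y i),
        Lp.coeFn_smul a (comp X i), Lp.coeFn_smul b (comp Y i)]
        with ω h1 h2 h3 h4 h5 h6 h7 h8 h9
      rw [h1, h4, h7]
      simp only [Pi.add_apply]
      rw [h5, h6, h8, h9]
      simp only [Pi.smul_apply, smul_eq_mul, PiLp.add_apply, PiLp.smul_apply, h2, h3]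
    rw [heq]
    exact hconvex _ _ a b ha hb hab
  · -- A2: monotonicity
    intro X Y h
    refine agg_mono hκ0 hκ1 hα0 hα1' hc0 hc1 fun i => ?_
    refine hmono (comp X i) (comp Y i) ?_
    filter_upwards [h, hcomp X i, hcomp Y i] with ω hω h1 h2
    rw [h1, h2]; exact hω i
  · -- A3: positive homogeneity
    intro t ht X
    have heq : ∀ i, ρ (comp (t • X) i) = t * ρ (comp X i) := by
      intro i
      have : ρ (comp (t • X) i) = ρ (t • comp X i) := by
        refine hcongr _ _ ?_
        filter_upwards [hcomp (t • X) i, hcomp X i, Lp.coeFn_smul t X,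
          Lp.coeFn_smul t (comp X i)] with ω h1 h2 h3 h4
        rw [h1, h3, h4]
        simp only [Pi.smul_apply, PiLp.smul_apply, smul_eq_mul, h2]
      rw [this, hhomog t ht]
    calc meanAvarAgg κ α c (fun i => ρ (comp (t • X) i))
        = meanAvarAgg κ α c (fun i => t * ρ (comp X i)) := by
          congr 1; funext i; exact heq i
      _ = t * meanAvarAgg κ α c (fun i => ρ (comp X i)) := agg_homog t ht _
  · -- A4: translation invariance
    intro X a
    have heq : ∀ i, ρ (comp (X + a • I) i) = ρ (comp X i) + a := by
      intro i
      have : ρ (comp (X + a • I) i) = ρ (comp X i + K a) := by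
        refine hcongr _ _ ?_
        filter_upwards [hcomp (X + a • I) i, hcomp X i, hI, hK a,
          Lp.coeFn_add X (a • I), Lp.coeFn_smul a I,
          Lp.coeFn_add (comp X i) (K a)] with ω h1 h2 h3 h4 h5 h6 h7
        rw [h1, h5, h7]
        simp only [Pi.add_apply, PiLp.add_apply]
        rw [h6]
        simp only [Pi.smul_apply, PiLp.smul_apply, smul_eq_mul]
        rw [h2, h3 i, h4]; ring
      rw [this, htrans]
    calc meanAvarAgg κ α c (fun i => ρ (comp (X + a • I) i))
        = meanAvarAgg κ α c (fun i => ρ (comp X i) + a) := by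
          congr 1; funext i; exact heq i
      _ = meanAvarAgg κ α c (fun i => ρ (comp X i)) + a :=
          agg_trans hα0 hα1' hc0 hc1 _ a
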